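/- For every pseudo-Boolean function f with Möbius transform a, every p ∈ (0,1)^n, and every S ⊆ N, Φ_{B,p}(f,S) = Σ_{T⊆N, T∩S≠∅} a(T) · Π_{i∈T∖S} p_i. -/

import Mathlib

/-!
Expand `f = Σ_R a(R) u_R` in unanimity games. The projection onto `span {v_{T,p} : T ⊆ S}` is
integration against the kernel `Σ_{T⊆S} v_{T,p}(X) v_{T,p}(Y) = Π_{i∈S} (1 + (x_i-p_i)(y_i-p_i)/(p_i(1-p_i)))`,
which factorises over coordinates, as does the product weight. Hence the projection of `u_R` is
`Π_{i∈R∩S} x_i · Π_{i∈R∖S} p_i`: the coordinates of `R` outside `S` are replaced by their means.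
Its value at `S` minus its value at `∅` is `Π_{i∈R∖S} p_i` when `R` meets `S`, and `0` otherwise.
-/

open Finset

/-- The product probability weight on `2^N`. -/
noncomputable def prodWeight {n : ℕ} (p : Fin n → ℝ) (X : Finset (Fin n)) : ℝ :=
  (∏ i ∈ X, p i) * ∏ i ∈ univ \ X, (1 - p i)

/-- The weighted basis function `v_{T,p}(x) = Π_{i∈T} (x_i − p_i)/√(p_i(1−p_i))`. -/
noncomputable def vWeighted {n : ℕ} (p : Fin n → ℝ) (T X : Finset (Fin n)) : ℝ :=
  ∏ i ∈ T, ((if i ∈ X then (1 : ℝ) else 0) - p i) / Real.sqrt (p i * (1 - p i))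

/-- The weighted inner product `⟨f,g⟩ = Σ_x w(x) f(x) g(x)`. -/
noncomputable def wInner {n : ℕ} (p : Fin n → ℝ) (f g : Finset (Fin n) → ℝ) : ℝ :=
  ∑ X : Finset (Fin n), prodWeight p X * (f X * g X)

/-- The best `S`-approximation `f_{S,p} = Σ_{T⊆S} ⟨f,v_{T,p}⟩ v_{T,p}`. -/
noncomputable def bestApprox {n : ℕ} (p : Fin n → ℝ) (f : Finset (Fin n) → ℝ)
    (S X : Finset (Fin n)) : ℝ :=
  ∑ T ∈ S.powerset, wInner p f (vWeighted p T) * vWeighted p T X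

/-- The weighted Banzhaf influence index `Φ_{B,p}(f,S) = f_{S,p}(S) − f_{S,p}(∅)`. -/
noncomputable def wBanzhafInfluence {n : ℕ} (p : Fin n → ℝ) (f : Finset (Fin n) → ℝ)
    (S : Finset (Fin n)) : ℝ :=
  bestApprox p f S S - bestApprox p f S ∅

/-- The Möbius transform `a(T) = Σ_{R⊆T}(−1)^{|T|−|R|} f(R)`. -/
noncomputable def moebius {n : ℕ} (f : Finset (Fin n) → ℝ) (T : Finset (Fin n)) : ℝ :=
  ∑ R ∈ T.powerset, (-1 : ℝ) ^ (T.card - R.card) * f R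

section

variable {n : ℕ}

/-- The unanimity game `u_R` of the paper, `u_R(X) = Π_{i∈R} x_i` with `x_i = [i ∈ X]`. -/
def unanimity (R X : Finset (Fin n)) : ℝ :=
  ∏ i ∈ R, if i ∈ X then 1 else 0

lemma unanimity_eq_ite (R X : Finset (Fin n)) :
    unanimity R X = if R ⊆ X then 1 else 0 := by
  simp [unanimity, prod_boole, subset_iff]

lemma sum_powerset_neg_one_pow_card_real {α : Type*} [DecidableEq α] (X : Finset α) :
    ∑ U ∈ X.powerset, (-1 : ℝ) ^ #U = if X = ∅ then 1 else 0 := by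
  exact_mod_cast (sum_powerset_neg_one_pow_card (x := X)).trans (by split_ifs <;> rfl)

lemma sum_Icc_neg_one_pow_card_sub {α : Type*} [DecidableEq α] {Q X : Finset α} (hQX : Q ⊆ X) :
    ∑ R ∈ Icc Q X, (-1 : ℝ) ^ (#R - #Q) = if Q = X then 1 else 0 := by
  have hdisj : ∀ U ∈ (X \ Q).powerset, Disjoint Q U :=
    fun U hU => disjoint_sdiff.mono_right (mem_powerset.1 hU)
  have hinj : Set.InjOn (Q ∪ ·) ((X \ Q).powerset : Set (Finset α)) := fun U hU V hV h => by
    rw [← union_sdiff_cancel_left (hdisj U hU), ← union_sdiff_cancel_left (hdisj V hV)]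
    exact congrArg (· \ Q) h
  rw [Icc_eq_image_powerset hQX, sum_image hinj,
    sum_congr rfl fun U hU => by rw [card_union_of_disjoint (hdisj U hU), Nat.add_sub_cancel_left],
    sum_powerset_neg_one_pow_card_real]
  exact if_congr (sdiff_eq_empty_iff_subset.trans ⟨(subset_antisymm hQX ·), (·.ge)⟩) rfl rfl

lemma sum_powerset_moebius (f : Finset (Fin n) → ℝ) (X : Finset (Fin n)) :
    ∑ R ∈ X.powerset, moebius f R = f X := by
  simp only [moebius]
  rw [sum_comm' (t' := X.powerset) (s' := fun Q => Icc Q X) (fun R Q => by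
    simp only [mem_powerset, mem_Icc]
    exact ⟨fun ⟨hRX, hQR⟩ => ⟨⟨hQR, hRX⟩, hQR.trans hRX⟩, fun ⟨⟨hQR, hRX⟩, _⟩ => ⟨hRX, hQR⟩⟩)]
  rw [sum_congr rfl fun Q hQ => by
    rw [← sum_mul, sum_Icc_neg_one_pow_card_sub (mem_powerset.1 hQ), ite_mul, one_mul, zero_mul]]
  simp

lemma sum_moebius_mul_unanimity (f : Finset (Fin n) → ℝ) (X : Finset (Fin n)) :
    ∑ R, moebius f R * unanimity R X = f X := by
  simp only [unanimity_eq_ite, mul_ite, mul_one, mul_zero, ← sum_filter, filter_subset_univ,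
    sum_powerset_moebius]

/-- Closed form of the reproducing kernel `Σ_{T⊆S} v_{T,p}(X) v_{T,p}(Y)` of `span {v_{T,p} : T ⊆ S}`. -/
noncomputable def approxKernel (p : Fin n → ℝ) (S X Y : Finset (Fin n)) : ℝ :=
  ∏ i ∈ S, (1 + ((if i ∈ X then 1 else 0) - p i) * ((if i ∈ Y then 1 else 0) - p i)
    / (p i * (1 - p i)))

lemma sum_powerset_vWeighted_mul_vWeighted {p : Fin n → ℝ}
    (hp : ∀ i, 0 ≤ p i * (1 - p i)) (S X Y : Finset (Fin n)) :
    ∑ T ∈ S.powerset, vWeighted p T X * vWeighted p T Y = approxKernel p S X Y := by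
  rw [approxKernel, prod_one_add]
  refine sum_congr rfl fun T _ => ?_
  rw [vWeighted, vWeighted, ← prod_mul_distrib]
  refine prod_congr rfl fun i _ => ?_
  rw [div_mul_div_comm, Real.mul_self_sqrt (hp i)]

lemma bestApprox_eq_sum_approxKernel {p : Fin n → ℝ}
    (hp : ∀ i, 0 ≤ p i * (1 - p i)) (g : Finset (Fin n) → ℝ) (S X : Finset (Fin n)) :
    bestApprox p g S X = ∑ Y, prodWeight p Y * g Y * approxKernel p S X Y := by
  simp only [bestApprox, wInner, sum_mul, ← sum_powerset_vWeighted_mul_vWeighted hp, mul_sum]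
  rw [sum_comm]
  refine sum_congr rfl fun Y _ => sum_congr rfl fun T _ => by ring

lemma sum_prodWeight_mul_prod (p : Fin n → ℝ) (φ : Fin n → ℝ → ℝ) :
    ∑ Y, prodWeight p Y * ∏ i, φ i (if i ∈ Y then 1 else 0)
      = ∏ i, (p i * φ i 1 + (1 - p i) * φ i 0) := by
  rw [prod_add, powerset_univ]
  refine sum_congr rfl fun Y _ => ?_
  have hsplit : ∏ i, φ i (if i ∈ Y then 1 else 0) = (∏ i ∈ Y, φ i 1) * ∏ i ∈ univ \ Y, φ i 0 := by
    rw [← prod_sdiff (subset_univ Y), mul_comm]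
    congr 1 <;> refine prod_congr rfl fun i hi => ?_
    · rw [if_pos hi]
    · rw [if_neg (mem_sdiff.1 hi).2]
  rw [prodWeight, hsplit, prod_mul_distrib, prod_mul_distrib]
  ring

lemma sum_prodWeight_mul_unanimity_mul_approxKernel {p : Fin n → ℝ}
    (hp : ∀ i, p i * (1 - p i) ≠ 0) (R S X : Finset (Fin n)) :
    ∑ Y, prodWeight p Y * unanimity R Y * approxKernel p S X Y
      = ∏ i ∈ R, if i ∈ S then (if i ∈ X then 1 else 0) else p i := by
  let φ : Fin n → ℝ → ℝ := fun i y => (if i ∈ R then y else 1) *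
    if i ∈ S then 1 + ((if i ∈ X then 1 else 0) - p i) * (y - p i) / (p i * (1 - p i)) else 1
  have hfactor : ∀ Y, unanimity R Y * approxKernel p S X Y
      = ∏ i, φ i (if i ∈ Y then 1 else 0) := fun Y => by
    simp only [φ, prod_mul_distrib, Fintype.prod_ite_mem, unanimity, approxKernel]
  simp only [mul_assoc, hfactor, sum_prodWeight_mul_prod, ← Fintype.prod_ite_mem R]
  refine prod_congr rfl fun i _ => ?_
  obtain ⟨hp0, hp1⟩ := mul_ne_zero_iff.1 (hp i)
  by_cases hR : i ∈ R <;> by_cases hS : i ∈ S <;> by_cases hX : i ∈ X <;>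
    simp only [φ, hR, hS, hX, if_true, if_false] <;> field_simp <;> ring

lemma bestApprox_eq_sum_moebius {p : Fin n → ℝ} (hp : ∀ i, p i ∈ Set.Ioo (0 : ℝ) 1)
    (f : Finset (Fin n) → ℝ) (S X : Finset (Fin n)) :
    bestApprox p f S X
      = ∑ R, moebius f R * ∏ i ∈ R, if i ∈ S then (if i ∈ X then 1 else 0) else p i := by
  have hvar : ∀ i, 0 < p i * (1 - p i) := fun i => mul_pos (hp i).1 (sub_pos.2 (hp i).2)
  calc bestApprox p f S X
      = ∑ Y, ∑ R, moebius f R * (prodWeight p Y * unanimity R Y * approxKernel p S X Y) := by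
        rw [bestApprox_eq_sum_approxKernel (fun i => (hvar i).le)]
        refine sum_congr rfl fun Y _ => ?_
        rw [← sum_moebius_mul_unanimity f Y, mul_sum, sum_mul]
        exact sum_congr rfl fun R _ => by ring
    _ = ∑ R, moebius f R * ∏ i ∈ R, if i ∈ S then (if i ∈ X then 1 else 0) else p i := by
        rw [sum_comm]
        simp only [← mul_sum, sum_prodWeight_mul_unanimity_mul_approxKernel fun i => (hvar i).ne']

lemma prod_ite_one_sub_prod_ite_zero {ι R : Type*} [CommRing R] [DecidableEq ι] (p : ι → R)
    (A S : Finset ι) :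
    (∏ i ∈ A, if i ∈ S then 1 else p i) - ∏ i ∈ A, (if i ∈ S then 0 else p i)
      = if (A ∩ S).Nonempty then ∏ i ∈ A \ S, p i else 0 := by
  simp only [prod_ite, prod_const, filter_mem_eq_inter, filter_not, one_pow, sdiff_inter_self_left,
    ← sub_mul]
  rcases (A ∩ S).eq_empty_or_nonempty with h | h
  · simp [h]
  · rw [if_pos h, zero_pow (card_ne_zero.2 h), sub_zero, one_mul]

end

/-- `Φ_{B,p}(f,S) = Σ_{T⊆N, T∩S≠∅} a(T) Π_{i∈T∖S} p_i`. -/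
theorem wBanzhafInfluence_eq_moebius_sum (n : ℕ) (p : Fin n → ℝ)
    (hp : ∀ i, p i ∈ Set.Ioo (0 : ℝ) 1) (f : Finset (Fin n) → ℝ) (S : Finset (Fin n)) :
    wBanzhafInfluence p f S
      = ∑ T ∈ (univ : Finset (Finset (Fin n))).filter (fun T => (T ∩ S).Nonempty),
          moebius f T * ∏ i ∈ T \ S, p i := by
  simp only [wBanzhafInfluence, bestApprox_eq_sum_moebius hp, ← sum_sub_distrib, ← mul_sub]
  simp +contextual only [notMem_empty, if_true, if_false, prod_ite_one_sub_prod_ite_zero, mul_ite,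
    mul_zero, sum_filter]
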